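/- arXiv:math/0702273 — 5 statements merged into one kernel-verified Lean document; each statement's English description precedes it below -/
import Mathlib

section
/- Let G be a group, h : G → ℝ a function, and D ≥ 0 with |h(γ₁γ₂) − h(γ₁) − h(γ₂)| ≤ D for all γ₁, γ₂ ∈ G. Let Q₁, …, Q_k be subgroups of G and B ≥ 0 with |h(q)| ≤ B for every q belonging to some Q_i. If h is unbounded on G (for every M there is g ∈ G with |h(g)| > M), then G is not boundedly generated by the Q_i: for every natural number N there exists g ∈ G that cannot be written as a product of at most N elements of Q₁ ∪ ⋯ ∪ Q_k. -/
/-!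
Along a product `x₁ ⋯ xₙ` the defect inequality accumulates at most `D` per factor, so
`|h (x₁ ⋯ xₙ)| ≤ n (B + D) + D` whenever every `|h xᵢ| ≤ B`. An element on which `|h|` exceeds
`N (B + D) + D` is therefore not a product of at most `N` elements of the `Qᵢ`.
-/

section QuasiHom

variable {G : Type*} [Group G] {h : G → ℝ} {D : ℝ}

lemma abs_map_one_le_of_defect (hdef : ∀ a b : G, |h (a * b) - h a - h b| ≤ D) : |h 1| ≤ D := by
  simpa using hdef 1 1

lemma abs_map_mul_le_of_defect (hdef : ∀ a b : G, |h (a * b) - h a - h b| ≤ D) (a b : G) :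
    |h (a * b)| ≤ |h a| + |h b| + D := by
  have := hdef a b
  calc |h (a * b)| = |h a + h b + (h (a * b) - h a - h b)| := by ring_nf
    _ ≤ |h a| + |h b| + |h (a * b) - h a - h b| := abs_add_three _ _ _
    _ ≤ |h a| + |h b| + D := by gcongr

lemma abs_map_list_prod_le_of_defect (hdef : ∀ a b : G, |h (a * b) - h a - h b| ≤ D)
    (l : List G) : |h l.prod| ≤ (l.map fun x => |h x| + D).sum + D := by
  induction l with
  | nil => simpa using abs_map_one_le_of_defect hdef
  | cons x l ih =>
    have := abs_map_mul_le_of_defect hdef x l.prod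
    simp only [List.prod_cons, List.map_cons, List.sum_cons]
    linarith

lemma abs_map_list_prod_le_length_mul (hdef : ∀ a b : G, |h (a * b) - h a - h b| ≤ D)
    {B : ℝ} {l : List G} (hl : ∀ x ∈ l, |h x| ≤ B) :
    |h l.prod| ≤ l.length * (B + D) + D := by
  have hsum : (l.map fun x => |h x| + D).sum ≤ l.length * (B + D) := by
    calc (l.map fun x => |h x| + D).sum ≤ (l.map fun x => |h x| + D).length • (B + D) :=
          List.sum_le_card_nsmul _ _ fun y hy => by
            obtain ⟨x, hx, rfl⟩ := List.mem_map.mp hy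
            exact add_le_add_left (hl x hx) D
      _ = l.length * (B + D) := by rw [List.length_map, nsmul_eq_mul]
  linarith [abs_map_list_prod_le_of_defect hdef l]

end QuasiHom

/-- If a quasi-homomorphism `h` with defect bound `D` is bounded by `B` on each of the
subgroups `Q₁, …, Q_k` but unbounded on `G`, then `G` is not boundedly generated by
the `Q_i`: for every `N` there is an element `g` that is not a product of at most
`N` elements of `Q₁ ∪ ⋯ ∪ Q_k`. -/
theorem not_boundedly_generated_of_unbounded_quasihom {G : Type*} [Group G]
    (h : G → ℝ) (D : ℝ) (hD : 0 ≤ D)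
    (hdef : ∀ γ₁ γ₂ : G, |h (γ₁ * γ₂) - h γ₁ - h γ₂| ≤ D)
    {k : ℕ} (Q : Fin k → Subgroup G) (B : ℝ) (hB : 0 ≤ B)
    (hQ : ∀ i : Fin k, ∀ q ∈ Q i, |h q| ≤ B)
    (hub : ∀ M : ℝ, ∃ g : G, M < |h g|) :
    ∀ N : ℕ, ∃ g : G,
      ¬ ∃ l : List G, l.length ≤ N ∧ (∀ x ∈ l, ∃ i : Fin k, x ∈ Q i) ∧ l.prod = g := by
  intro N
  obtain ⟨g, hg⟩ := hub (N * (B + D) + D)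
  refine ⟨g, fun ⟨l, hlen, hmem, hprod⟩ => ?_⟩
  have hbound := abs_map_list_prod_le_length_mul hdef fun x hx =>
    let ⟨i, hi⟩ := hmem x hx; hQ i x hi
  have hscale : (l.length : ℝ) * (B + D) ≤ N * (B + D) :=
    mul_le_mul_of_nonneg_right (by exact_mod_cast hlen) (add_nonneg hB hD)
  rw [hprod] at hbound
  linarith
end

section
/- Let G be a group, h : G → ℝ a function, and D ≥ 0 with |h(γ₁γ₂) − h(γ₁) − h(γ₂)| ≤ D for all γ₁, γ₂ ∈ G. Let Q₁, …, Q_m be subgroups of G and B ≥ 0 with |h(q)| ≤ B for every q belonging to some Q_i. If h is unbounded on G (for every M there is g ∈ G with |h(g)| > M), then Q₁Q₂⋯Q_m ≠ G; that is, there exists g ∈ G which cannot be written as g = q₁q₂⋯q_m with q_i ∈ Q_i for each i. -/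
/-!
A quasimorphism `h` of defect `D` satisfies `|h (g₁ ⋯ gₙ)| ≤ ∑ |h gᵢ| + (n + 1) D`, so it is
bounded by `m B + (m + 1) D` on the product set `Q₁ ⋯ Q_m`. An unbounded `h` therefore takes a
larger value somewhere, and that element lies outside the product set.
-/

def IsQuasimorphism {G : Type*} [Mul G] (h : G → ℝ) (D : ℝ) : Prop :=
  ∀ a b : G, |h (a * b) - h a - h b| ≤ D

namespace IsQuasimorphism

variable {G : Type*} {h : G → ℝ} {D : ℝ}

theorem abs_map_mul_le [Mul G] (hh : IsQuasimorphism h D) (a b : G) :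
    |h (a * b)| ≤ |h a| + |h b| + D :=
  calc |h (a * b)| = |(h (a * b) - h a - h b) + h a + h b| := by ring_nf
    _ ≤ |h (a * b) - h a - h b| + |h a| + |h b| := abs_add_three _ _ _
    _ ≤ |h a| + |h b| + D := by linarith [hh a b]

theorem abs_map_one_le [MulOneClass G] (hh : IsQuasimorphism h D) : |h 1| ≤ D := by
  simpa using hh 1 1

theorem abs_map_list_prod_le [Monoid G] (hh : IsQuasimorphism h D) (l : List G) :
    |h l.prod| ≤ (l.map fun x => |h x|).sum + (l.length + 1) * D := by
  induction l with
  | nil => simpa using hh.abs_map_one_le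
  | cons a l ih =>
    simp only [List.prod_cons, List.map_cons, List.sum_cons, List.length_cons]
    push_cast
    linarith [hh.abs_map_mul_le a l.prod]

theorem abs_map_prod_ofFn_le [Monoid G] (hh : IsQuasimorphism h D) {m : ℕ} {q : Fin m → G}
    {B : ℝ} (hq : ∀ i, |h (q i)| ≤ B) :
    |h (List.ofFn q).prod| ≤ m * B + (m + 1) * D := by
  have hsum : ((List.ofFn q).map fun x => |h x|).sum ≤ m * B := by
    simpa [List.map_ofFn, List.sum_ofFn] using
      Finset.sum_le_card_nsmul Finset.univ _ _ fun i _ => hq i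
  have hprod := hh.abs_map_list_prod_le (List.ofFn q)
  rw [List.length_ofFn] at hprod
  linarith

end IsQuasimorphism

theorem product_set_ne_group_of_unbounded_quasihom_general {G : Type*} [Group G]
    (h : G → ℝ) (D : ℝ)
    (hdef : ∀ γ₁ γ₂ : G, |h (γ₁ * γ₂) - h γ₁ - h γ₂| ≤ D)
    {m : ℕ} (Q : Fin m → Subgroup G) (B : ℝ)
    (hQ : ∀ i : Fin m, ∀ q ∈ Q i, |h q| ≤ B)
    (hub : ∀ M : ℝ, ∃ g : G, M < |h g|) :
    ∃ g : G, ¬ ∃ q : Fin m → G, (∀ i, q i ∈ Q i) ∧ (List.ofFn q).prod = g := by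
  obtain ⟨g, hg⟩ := hub (m * B + (m + 1) * D)
  refine ⟨g, ?_⟩
  rintro ⟨q, hq, rfl⟩
  have hbound := IsQuasimorphism.abs_map_prod_ofFn_le hdef fun i => hQ i (q i) (hq i)
  linarith

/-- If a quasi-homomorphism `h` with defect bound `D` is bounded by `B` on each of the
subgroups `Q₁, …, Q_m` but unbounded on `G`, then the product set
`Q₁Q₂⋯Q_m` is not all of `G`. -/
theorem product_set_ne_group_of_unbounded_quasihom {G : Type*} [Group G]
    (h : G → ℝ) (D : ℝ) (hD : 0 ≤ D)
    (hdef : ∀ γ₁ γ₂ : G, |h (γ₁ * γ₂) - h γ₁ - h γ₂| ≤ D)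
    {m : ℕ} (Q : Fin m → Subgroup G) (B : ℝ) (hB : 0 ≤ B)
    (hQ : ∀ i : Fin m, ∀ q ∈ Q i, |h q| ≤ B)
    (hub : ∀ M : ℝ, ∃ g : G, M < |h g|) :
    ∃ g : G, ¬ ∃ q : Fin m → G, (∀ i, q i ∈ Q i) ∧ (List.ofFn q).prod = g :=
  product_set_ne_group_of_unbounded_quasihom_general h D hdef Q B hQ hub
end

section
/- Let G be a group, h : G → ℝ a function, and D ≥ 0 with |h(γ₁γ₂) − h(γ₁) − h(γ₂)| ≤ D for all γ₁, γ₂ ∈ G, and suppose h is unbounded on G (for every M there is g ∈ G with |h(g)| > M). Suppose given finitely many finite sequences of subgroups (Q_{j,1}, …, Q_{j,m_j}) for j = 1, …, r, and B ≥ 0 such that |h(q)| ≤ B whenever q belongs to any of the subgroups Q_{j,i}. Then the union over j = 1, …, r of the product sets Q_{j,1}Q_{j,2}⋯Q_{j,m_j} is a proper subset of G. -/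
/-!
Each factor of an element `q₁ ⋯ qₘ` of a product set `Q₁ ⋯ Qₘ` has `|h qᵢ| ≤ B`, and every
multiplication costs at most the defect `D`, so `|h| ≤ m (B + D) + D` on `Q₁ ⋯ Qₘ`. A finite
union of such sets therefore carries a uniform bound on `|h|`, which an unbounded `h` exceeds.
-/

section QuasiHom

variable {G : Type*} [Group G] {h : G → ℝ} {D : ℝ}

theorem abs_quasihom_one_le (hdef : ∀ γ₁ γ₂ : G, |h (γ₁ * γ₂) - h γ₁ - h γ₂| ≤ D) :
    |h 1| ≤ D := by
  simpa using hdef 1 1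

theorem abs_quasihom_list_prod_le (hdef : ∀ γ₁ γ₂ : G, |h (γ₁ * γ₂) - h γ₁ - h γ₂| ≤ D)
    {B : ℝ} : ∀ l : List G, (∀ x ∈ l, |h x| ≤ B) → |h l.prod| ≤ l.length * (B + D) + D
  | [], _ => by simpa using abs_quasihom_one_le hdef
  | a :: l, hl => by
    have ha : |h a| ≤ B := hl a List.mem_cons_self
    have ih := abs_quasihom_list_prod_le hdef l fun x hx => hl x (List.mem_cons_of_mem a hx)
    have hmul : |h (a * l.prod)| ≤ D + B + (l.length * (B + D) + D) :=
      calc |h (a * l.prod)| = |(h (a * l.prod) - h a - h l.prod) + h a + h l.prod| := by ring_nf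
        _ ≤ |h (a * l.prod) - h a - h l.prod| + |h a| + |h l.prod| := abs_add_three _ _ _
        _ ≤ D + B + (l.length * (B + D) + D) := by gcongr; exact hdef _ _
    rw [List.prod_cons, List.length_cons, Nat.cast_succ]
    linarith

end QuasiHom

theorem union_of_product_sets_proper_of_unbounded_quasihom_general {G : Type*} [Group G]
    (h : G → ℝ) (D : ℝ)
    (hdef : ∀ γ₁ γ₂ : G, |h (γ₁ * γ₂) - h γ₁ - h γ₂| ≤ D)
    (hub : ∀ M : ℝ, ∃ g : G, M < |h g|)
    {r : ℕ} (m : Fin r → ℕ) (Q : (j : Fin r) → Fin (m j) → Subgroup G)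
    (B : ℝ)
    (hQ : ∀ (j : Fin r) (i : Fin (m j)), ∀ q ∈ Q j i, |h q| ≤ B) :
    ∃ g : G, ∀ j : Fin r,
      ¬ ∃ q : Fin (m j) → G, (∀ i, q i ∈ Q j i) ∧ (List.ofFn q).prod = g := by
  obtain ⟨M, hM⟩ := Finite.bddAbove_range fun j => (m j : ℝ) * (B + D) + D
  obtain ⟨g, hg⟩ := hub M
  refine ⟨g, fun j ⟨q, hq, hqg⟩ => hg.not_ge ?_⟩
  have hfactors : ∀ x ∈ List.ofFn q, |h x| ≤ B := by
    simpa [List.forall_mem_ofFn_iff] using fun i => hQ j i _ (hq i)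
  calc |h g| ≤ (m j : ℝ) * (B + D) + D := by
        simpa [hqg] using abs_quasihom_list_prod_le hdef _ hfactors
    _ ≤ M := hM ⟨j, rfl⟩

/-- If a quasi-homomorphism `h` with defect bound `D` is unbounded on `G` and bounded
by `B` on each member of finitely many finite sequences of subgroups
`(Q_{j,1}, …, Q_{j,m_j})`, `j = 1, …, r`, then the union of the product sets
`Q_{j,1}Q_{j,2}⋯Q_{j,m_j}` is a proper subset of `G`. -/
theorem union_of_product_sets_proper_of_unbounded_quasihom {G : Type*} [Group G]
    (h : G → ℝ) (D : ℝ) (hD : 0 ≤ D)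
    (hdef : ∀ γ₁ γ₂ : G, |h (γ₁ * γ₂) - h γ₁ - h γ₂| ≤ D)
    (hub : ∀ M : ℝ, ∃ g : G, M < |h g|)
    {r : ℕ} (m : Fin r → ℕ) (Q : (j : Fin r) → Fin (m j) → Subgroup G)
    (B : ℝ) (hB : 0 ≤ B)
    (hQ : ∀ (j : Fin r) (i : Fin (m j)), ∀ q ∈ Q j i, |h q| ≤ B) :
    ∃ g : G, ∀ j : Fin r,
      ¬ ∃ q : Fin (m j) → G, (∀ i, q i ∈ Q j i) ∧ (List.ofFn q).prod = g :=
  union_of_product_sets_proper_of_unbounded_quasihom_general h D hdef hub m Q B hQ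
end

section
/- Let R > 0 and I > 0 be real numbers, let p ≥ q > 0 be real numbers, and let α, β ≥ 0 be real numbers satisfying α ≤ R·√I, β ≤ R·√I, and p·β ≤ q·α. Then q·α + p·β ≤ 2·R·√(p·q·I). -/
theorem Real.le_sqrt_mul_of_le {p q : ℝ} (hq : 0 ≤ q) (hqp : q ≤ p) : q ≤ √(p * q) :=
  calc q = √(q * q) := (Real.sqrt_mul_self hq).symm
    _ ≤ √(p * q) := Real.sqrt_le_sqrt (mul_le_mul_of_nonneg_right hqp hq)

theorem length_bound_weighted_midpoint_general (R I p q α β : ℝ)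
    (hR : 0 < R) (hq : 0 < q) (hpq : q ≤ p)
    (hαR : α ≤ R * Real.sqrt I)
    (hbal : p * β ≤ q * α) :
    q * α + p * β ≤ 2 * R * Real.sqrt (p * q * I) :=
  calc q * α + p * β ≤ 2 * (q * α) := by linarith
    _ ≤ 2 * (q * (R * √I)) := by gcongr
    _ = 2 * R * (q * √I) := by ring
    _ ≤ 2 * R * (√(p * q) * √I) := by gcongr; exact Real.le_sqrt_mul_of_le hq.le hpq
    _ = 2 * R * √(p * q * I) := by rw [Real.sqrt_mul (mul_nonneg (hq.le.trans hpq) hq.le) I]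

/-- Computational core of Lemma "ax3": if `α, β ≤ R·√I` and `p·β ≤ q·α` with
`p ≥ q > 0`, then `q·α + p·β ≤ 2·R·√(p·q·I)`. -/
theorem length_bound_weighted_midpoint (R I p q α β : ℝ)
    (hR : 0 < R) (hI : 0 < I) (hq : 0 < q) (hpq : q ≤ p)
    (hα : 0 ≤ α) (hβ : 0 ≤ β)
    (hαR : α ≤ R * Real.sqrt I) (hβR : β ≤ R * Real.sqrt I)
    (hbal : p * β ≤ q * α) :
    q * α + p * β ≤ 2 * R * Real.sqrt (p * q * I) :=
  length_bound_weighted_midpoint_general R I p q α β hR hq hpq hαR hbal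
end

section
/- Let X be a connected graph with vertex set V and edge-path metric d. Suppose that for each ordered pair of vertices (a, b) there is given a subset Λ_{ab} ⊆ V with a, b ∈ Λ_{ab}, together with a relation ≤_{ab} on Λ_{ab} that is transitive and total (any two elements of Λ_{ab} are comparable), such that Λ_{ab} = Λ_{ba} as sets and ≤_{ba} is the reverse of ≤_{ab}. Suppose also given a function φ : V × V × V → V that is invariant under all permutations of its three arguments and satisfies φ(a, b, c) ∈ Λ_{ab} for all a, b, c. For x, y ∈ Λ_{ab} write Λ_{ab}[x, y] = {z ∈ Λ_{ab} : x ≤_{ab} z ≤_{ab} y or y ≤_{ab} z ≤_{ab} x}. Assume there exists K > 0 such that: (1) for all vertices a, b, c, the Hausdorff distance between Λ_{ab}[a, φ(a,b,c)] and Λ_{ac}[a, φ(a,b,c)] is at most K; (2) whenever c and d are adjacent vertices, the diameter of Λ_{ab}[φ(a,b,c), φ(a,b,d)] is at most K for all a, b; (3) whenever c ∈ Λ_{ab}, the diameter of Λ_{ab}[c, φ(a,b,c)] is at most K. Then X is Gromov hyperbolic: there exists δ ≥ 0 such that for all vertices x, y, z, w, d(x,y) + d(z,w) ≤ max(d(x,z)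 + d(y,w), d(x,w) + d(y,z)) + δ. -/
/-!
Axioms (2) and (3) bound the diameter of `Λ_{ab}[x, y]` linearly in `d(x, y)`: cut it at the
centres `φ(a, b, ·)` of the vertices of a geodesic from `x` to `y`. They also make `Λ_{ab}[a, b]`
coarsely connected: retract onto it the chain `a, φ(a, b, ·) along a path from a to b, b`.

Let `m = φ(a, b, c)`. A point of `Λ_{ab}[a, m]` is moved a bounded distance by axiom (1) into
`Λ_{ac}[c, m]`, then into `Λ_{cb}[b, m]`, then into `Λ_{ab}[b, m]`, unless it meets one of the
sides `Λ_{ac}[a, c]`, `Λ_{cb}[c, b]` on the way; at the end one of `a`, `b`, `m` lies between the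
point and its image. So every point of `Λ_{ab}[a, b]` is close to the other two sides or to `m`,
and a continuity argument along `Λ_{ab}[a, b]` removes the alternative `m`: triangles are thin.

Thin triangles keep `Λ_{ab}[a, b]` uniformly close to the geodesics from `a` to `b`. Bisection
gives a bound logarithmic in `d(a, b)`. If `z` is at distance `D` from the geodesics, attained at
`c₀`, cut a geodesic through `c₀` at distance `3D` on both sides of `c₀`. Two thin triangles put
`z` near the `Λ`-segment over one of the three pieces. Over an outer piece this segment stays
close to the piece by induction on `d(a, b)`, but the piece is far from `z`; the middle piece has
length at most `6D`, so bisection gives `D = O(log D)`.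

Finally, continuity along `Λ_{xy}[x, y]` gives a point `p` with
`2 d(w, p) ≈ d(w, x) + d(w, y) - d(x, y)`, and thin triangles give the four-point condition.
-/

/-- The (coarse) interval `Λ_{ab}[x, y]`: points of `Λ a b` lying between `x` and `y`
with respect to the coarse order `le a b` (in either direction). -/
def coarseInterval {V : Type*} (Λ : V → V → Set V) (le : V → V → V → V → Prop)
    (a b x y : V) : Set V :=
  {z ∈ Λ a b | (le a b x z ∧ le a b z y) ∨ (le a b y z ∧ le a b z x)}

open Relation

theorem Relation.ReflTransGen.exists_rel_of_not_of {α : Type*} {r : α → α → Prop} {P : α → Prop}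
    {a b : α} (h : ReflTransGen r a b) (ha : ¬P a) (hb : P b) : ∃ x y, r x y ∧ ¬P x ∧ P y := by
  induction h with
  | refl => exact absurd hb ha
  | @tail c d _ hcd ih =>
    by_cases hc : P c
    · exact ih hc
    · exact ⟨c, d, hcd, hc, hb⟩

theorem Nat.mul_self_le_two_pow {m : ℕ} (hm : 4 ≤ m) : m * m ≤ 2 ^ m := by
  induction m, hm using Nat.le_induction with
  | base => norm_num
  | succ n hn ih => rw [pow_succ]; nlinarith

theorem Nat.le_add_add_four_of_two_pow_le {k A B : ℕ} (h : 2 ^ k ≤ A * k + B) : k ≤ A + B + 4 := by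
  by_contra! hk
  have := Nat.mul_self_le_two_pow (m := k) (by omega)
  nlinarith

namespace SimpleGraph

variable {V : Type*} {G : SimpleGraph V}

def geodesicInterval (G : SimpleGraph V) (a b : V) : Set V :=
  {c | G.dist a c + G.dist c b = G.dist a b}

theorem mem_geodesicInterval {a b c : V} :
    c ∈ G.geodesicInterval a b ↔ G.dist a c + G.dist c b = G.dist a b := Iff.rfl

theorem left_mem_geodesicInterval (a b : V) : a ∈ G.geodesicInterval a b := by
  simp [mem_geodesicInterval]

theorem right_mem_geodesicInterval (a b : V) : b ∈ G.geodesicInterval a b := by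
  simp [mem_geodesicInterval]

theorem geodesicInterval_comm (a b : V) : G.geodesicInterval a b = G.geodesicInterval b a := by
  ext c
  have := G.dist_comm (u := a) (v := c)
  have := G.dist_comm (u := c) (v := b)
  have := G.dist_comm (u := a) (v := b)
  simp only [mem_geodesicInterval]
  omega

theorem Connected.exists_mem_geodesicInterval_dist_eq (hG : G.Connected) {a b : V} {k : ℕ}
    (hk : k ≤ G.dist a b) : ∃ c ∈ G.geodesicInterval a b, G.dist a c = k := by
  obtain ⟨W, hW⟩ := hG.exists_walk_length_eq_dist a b
  have h₁ := G.dist_le (W.take k)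
  have h₂ := G.dist_le (W.drop k)
  have := hG.dist_triangle (u := a) (v := W.getVert k) (w := b)
  rw [Walk.take_length] at h₁
  rw [Walk.drop_length] at h₂
  refine ⟨W.getVert k, mem_geodesicInterval.2 ?_, ?_⟩ <;> omega

theorem Connected.geodesicInterval_subset (hG : G.Connected) {a b c x y : V}
    (hc : c ∈ G.geodesicInterval a b) (hx : x ∈ G.geodesicInterval a c)
    (hy : y ∈ G.geodesicInterval c b) : G.geodesicInterval x y ⊆ G.geodesicInterval a b := by
  intro e he
  simp only [mem_geodesicInterval] at *
  have := hG.dist_triangle (u := a) (v := x) (w := e)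
  have := hG.dist_triangle (u := e) (v := y) (w := b)
  have := hG.dist_triangle (u := x) (v := c) (w := y)
  have := hG.dist_triangle (u := a) (v := e) (w := b)
  omega

def ThinTriangles (G : SimpleGraph V) (L : V → V → Set V) (T : ℕ) : Prop :=
  ∀ a b c, ∀ z ∈ L a b, ∃ p ∈ L a c ∪ L c b, G.dist z p ≤ T

def NearGeodesics (G : SimpleGraph V) (L : V → V → Set V) (C : ℕ) : Prop :=
  ∀ a b, ∀ z ∈ L a b, ∃ e ∈ G.geodesicInterval a b, G.dist z e ≤ C

variable {L : V → V → Set V} {T M C s : ℕ}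

theorem Connected.exists_mem_geodesicInterval_dist_le_of_le_two_pow (hG : G.Connected)
    (hthin : G.ThinTriangles L T)
    (hsmall : ∀ a b, G.dist a b ≤ 1 → ∀ z ∈ L a b, G.dist a z ≤ M) (k : ℕ) :
    ∀ a b, G.dist a b ≤ 2 ^ k → ∀ z ∈ L a b,
      ∃ e ∈ G.geodesicInterval a b, G.dist z e ≤ T * k + M := by
  induction k with
  | zero =>
    intro a b hab z hz
    exact ⟨a, G.left_mem_geodesicInterval a b, by
      rw [G.dist_comm]; simpa using hsmall a b (by simpa using hab) z hz⟩
  | succ k ih =>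
    intro a b hab z hz
    obtain ⟨c, hc, hac⟩ := hG.exists_mem_geodesicInterval_dist_eq
      (min_le_right (2 ^ k) (G.dist a b))
    have hcb : G.dist c b ≤ 2 ^ k := by
      rw [mem_geodesicInterval] at hc; rw [pow_succ] at hab; omega
    obtain ⟨p, hp | hp, hzp⟩ := hthin a b c z hz
    · obtain ⟨e, he, hpe⟩ := ih a c (by omega) p hp
      refine ⟨e, hG.geodesicInterval_subset hc (G.left_mem_geodesicInterval a c)
        (G.left_mem_geodesicInterval c b) he, ?_⟩
      have := hG.dist_triangle (u := z) (v := p) (w := e)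
      rw [mul_add_one]; omega
    · obtain ⟨e, he, hpe⟩ := ih c b hcb p hp
      refine ⟨e, hG.geodesicInterval_subset hc (G.right_mem_geodesicInterval a c)
        (G.right_mem_geodesicInterval c b) he, ?_⟩
      have := hG.dist_triangle (u := z) (v := p) (w := e)
      rw [mul_add_one]; omega

theorem Connected.lt_dist_of_mem_outer (hG : G.Connected)
    (hsmall : ∀ a b, G.dist a b ≤ 1 → ∀ z ∈ L a b, G.dist a z ≤ M) (hC : 2 * T + M ≤ C)
    {a b c c₀ z p : V}
    (ih : ∀ a' b', G.dist a' b' < G.dist a b → ∀ z ∈ L a' b',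
      ∃ e ∈ G.geodesicInterval a' b', G.dist z e ≤ C)
    (hc₀ : c₀ ∈ G.geodesicInterval a b)
    (hmin : ∀ e ∈ G.geodesicInterval a b, G.dist z c₀ ≤ G.dist z e) (hfar : C < G.dist z c₀)
    (hc : c ∈ G.geodesicInterval c₀ a) (hdc : G.dist c₀ c = min (3 * G.dist z c₀) (G.dist c₀ a))
    (hp : p ∈ L a c) : 2 * T < G.dist z p := by
  by_contra! hzp
  rw [mem_geodesicInterval] at hc hc₀
  by_cases h3 : 3 * G.dist z c₀ ≤ G.dist c₀ a
  · have hac : G.dist a c < G.dist a b := by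
      have := G.dist_comm (u := a) (v := c); have := G.dist_comm (u := a) (v := c₀); omega
    obtain ⟨e, he, hpe⟩ := ih a c hac p hp
    rw [mem_geodesicInterval] at he
    have := hG.dist_triangle (u := c₀) (v := e) (w := a)
    have := hG.dist_triangle (u := e) (v := z) (w := c₀)
    have := hG.dist_triangle (u := z) (v := p) (w := e)
    have := G.dist_comm (u := c₀) (v := e); have := G.dist_comm (u := e) (v := z)
    have := G.dist_comm (u := a) (v := e); have := G.dist_comm (u := a) (v := c)
    omega
  · have hca : c = a := hG.dist_eq_zero_iff.1 (by omega)
    subst hca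
    have := hsmall c c (by simp) p hp
    have := hmin c (G.left_mem_geodesicInterval c b)
    have := hG.dist_triangle (u := z) (v := p) (w := c)
    have := G.dist_comm (u := c) (v := p)
    omega

theorem Connected.lt_dist_of_mem_middle (hG : G.Connected)
    (hthin : G.ThinTriangles L T)
    (hsmall : ∀ a b, G.dist a b ≤ 1 → ∀ z ∈ L a b, G.dist a z ≤ M)
    (hC : T * (36 * T + 12 * M + 4) + 2 * T + M ≤ C) {a b c₀ c₁ c₂ z p : V}
    (hc₀ : c₀ ∈ G.geodesicInterval a b)
    (hmin : ∀ e ∈ G.geodesicInterval a b, G.dist z c₀ ≤ G.dist z e) (hfar : C < G.dist z c₀)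
    (hc₁ : c₁ ∈ G.geodesicInterval c₀ a) (hc₂ : c₂ ∈ G.geodesicInterval c₀ b)
    (hd₁ : G.dist c₀ c₁ ≤ 3 * G.dist z c₀) (hd₂ : G.dist c₀ c₂ ≤ 3 * G.dist z c₀)
    (hp : p ∈ L c₁ c₂) : 2 * T < G.dist z p := by
  by_contra! hzp
  set D := G.dist z c₀
  set k := Nat.log 2 (6 * D) + 1
  have hk : 6 * D < 2 ^ k := Nat.lt_pow_succ_log_self (by norm_num) _
  have hk' : 2 ^ k ≤ 12 * D := by
    have := Nat.pow_log_le_self 2 (x := 6 * D) (by omega)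
    rw [pow_succ]; omega
  have h₁₂ : G.dist c₁ c₂ ≤ 2 ^ k := by
    have := hG.dist_triangle (u := c₁) (v := c₀) (w := c₂)
    have := G.dist_comm (u := c₁) (v := c₀)
    omega
  obtain ⟨e, he, hpe⟩ :=
    hG.exists_mem_geodesicInterval_dist_le_of_le_two_pow hthin hsmall k c₁ c₂ h₁₂ p hp
  rw [geodesicInterval_comm] at hc₁
  have hDk : D ≤ T * k + 2 * T + M := by
    have := hmin e (hG.geodesicInterval_subset hc₀ hc₁ hc₂ he)
    have := hG.dist_triangle (u := z) (v := p) (w := e)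
    omega
  have hkle : k ≤ 36 * T + 12 * M + 4 := by
    have h := Nat.le_add_add_four_of_two_pow_le (A := 12 * T) (B := 24 * T + 12 * M) (k := k)
    have : 12 * T * k = 12 * (T * k) := by ring
    omega
  have := Nat.mul_le_mul_left T hkle
  omega

theorem Connected.exists_nearGeodesics (hG : G.Connected)
    (hsymm : ∀ a b, L a b = L b a)
    (hthin : G.ThinTriangles L T)
    (hsmall : ∀ a b, G.dist a b ≤ 1 → ∀ z ∈ L a b, G.dist a z ≤ M) :
    ∃ C, G.NearGeodesics L C := by
  set C := T * (36 * T + 12 * M + 4) + 2 * T + M with hC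
  refine ⟨C, fun a b => ?_⟩
  induction hn : G.dist a b using Nat.strong_induction_on generalizing a b with
  | _ n ih =>
  intro z hz
  obtain ⟨c₀, hc₀, hmin⟩ := (measure (G.dist z)).wf.has_min _
    ⟨a, G.left_mem_geodesicInterval a b⟩
  replace hmin : ∀ e ∈ G.geodesicInterval a b, G.dist z c₀ ≤ G.dist z e :=
    fun e he => not_lt.1 (hmin e he)
  refine ⟨c₀, hc₀, not_lt.1 fun hfar => ?_⟩
  obtain ⟨c₁, hc₁, hd₁⟩ := hG.exists_mem_geodesicInterval_dist_eq
    (min_le_right (3 * G.dist z c₀) (G.dist c₀ a))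
  obtain ⟨c₂, hc₂, hd₂⟩ := hG.exists_mem_geodesicInterval_dist_eq
    (min_le_right (3 * G.dist z c₀) (G.dist c₀ b))
  obtain ⟨p, hp | hp, hzp⟩ := hthin a b c₁ z hz
  · exact (hG.lt_dist_of_mem_outer (T := T) (C := C) hsmall (by omega)
      (fun a' b' h => ih _ (hn ▸ h) a' b' rfl) hc₀ hmin hfar hc₁ hd₁ hp).not_ge (by omega)
  obtain ⟨q, hq | hq, hpq⟩ := hthin c₁ b c₂ p hp
  · refine (hG.lt_dist_of_mem_middle hthin hsmall le_rfl hc₀ hmin hfar hc₁ hc₂ (by omega)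
      (by omega) hq).not_ge ?_
    have := hG.dist_triangle (u := z) (v := p) (w := q)
    omega
  · rw [geodesicInterval_comm] at hc₀ hmin
    rw [hsymm] at hq
    refine (hG.lt_dist_of_mem_outer (T := T) (C := C) hsmall (by omega)
      (fun a' b' h => ih _ (hn ▸ G.dist_comm (u := a) ▸ h) a' b' rfl)
      hc₀ hmin hfar hc₂ hd₂ hq).not_ge ?_
    have := hG.dist_triangle (u := z) (v := p) (w := q)
    omega

theorem Connected.dist_add_dist_le_of_mem (hG : G.Connected)
    (hnear : G.NearGeodesics L C)
    {x y p : V} (hp : p ∈ L x y) : G.dist x p + G.dist p y ≤ G.dist x y + 2 * C := by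
  obtain ⟨e, he, hpe⟩ := hnear x y p hp
  rw [mem_geodesicInterval] at he
  have := hG.dist_triangle (u := x) (v := e) (w := p)
  have := hG.dist_triangle (u := p) (v := e) (w := y)
  have := G.dist_comm (u := e) (v := p)
  omega

theorem Connected.dist_add_dist_le_two_mul_dist_add (hG : G.Connected)
    (hnear : G.NearGeodesics L C)
    {x y p : V} (hp : p ∈ L x y) (w : V) :
    G.dist w x + G.dist w y ≤ 2 * G.dist w p + G.dist x y + 2 * C := by
  have := hG.dist_add_dist_le_of_mem hnear hp
  have := hG.dist_triangle (u := w) (v := p) (w := x)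
  have := hG.dist_triangle (u := w) (v := p) (w := y)
  have := G.dist_comm (u := x) (v := p)
  omega

theorem Connected.exists_mem_two_mul_dist_add_le (hG : G.Connected)
    (hmem : ∀ a b, a ∈ L a b)
    (hchain : ∀ a b, ReflTransGen (fun p q => p ∈ L a b ∧ q ∈ L a b ∧ G.dist p q ≤ s) a b)
    (hthin : G.ThinTriangles L T)
    (hnear : G.NearGeodesics L C) (w x y : V) :
    ∃ p ∈ L x y,
      2 * G.dist w p + G.dist x y ≤ G.dist w x + G.dist w y + (4 * C + 4 * T + 2 * s) := by
  have hwx := G.dist_comm (u := w) (v := x)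
  have hwy := G.dist_comm (u := w) (v := y)
  by_cases hx : G.dist x y + G.dist x w ≤ G.dist y w
  · exact ⟨x, hmem x y, by omega⟩
  obtain ⟨p, q, ⟨-, hq, hpq⟩, hp, hq'⟩ := (hchain x y).exists_rel_of_not_of
    (P := fun v => G.dist x y + G.dist x w ≤ 2 * G.dist x v + G.dist y w) (by simpa using hx)
    (by have := hG.dist_triangle (u := x) (v := y) (w := w); omega)
  obtain ⟨r, hr | hr, hqr⟩ := hthin x y w q hq
  · refine ⟨q, hq, ?_⟩
    have := hG.dist_add_dist_le_of_mem hnear hr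
    have := hG.dist_triangle (u := x) (v := r) (w := q)
    have := hG.dist_triangle (u := w) (v := r) (w := q)
    have := G.dist_comm (u := w) (v := r)
    have := G.dist_comm (u := r) (v := q)
    omega
  · refine ⟨q, hq, ?_⟩
    have := hG.dist_add_dist_le_of_mem hnear hr
    have := hG.dist_triangle (u := x) (v := q) (w := y)
    have := hG.dist_triangle (u := q) (v := r) (w := y)
    have := hG.dist_triangle (u := w) (v := r) (w := q)
    have := hG.dist_triangle (u := x) (v := p) (w := q)
    have := G.dist_comm (u := r) (v := q)
    have := G.dist_comm (u := y) (v := w)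
    omega

theorem Connected.four_point (hG : G.Connected)
    (hmem : ∀ a b, a ∈ L a b)
    (hchain : ∀ a b, ReflTransGen (fun p q => p ∈ L a b ∧ q ∈ L a b ∧ G.dist p q ≤ s) a b)
    (hthin : G.ThinTriangles L T)
    (hnear : G.NearGeodesics L C) (x y z w : V) :
    G.dist x y + G.dist z w ≤
      max (G.dist x z + G.dist y w) (G.dist x w + G.dist y z) + (6 * C + 6 * T + 2 * s) := by
  obtain ⟨p, hp, hwp⟩ := hG.exists_mem_two_mul_dist_add_le hmem hchain hthin hnear w x y
  obtain ⟨q, hq | hq, hpq⟩ := hthin x y z p hp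
  all_goals
    have := hG.dist_add_dist_le_two_mul_dist_add hnear hq w
    have := hG.dist_triangle (u := w) (v := p) (w := q)
    have := G.dist_comm (u := p) (v := q)
    have := G.dist_comm (u := w) (v := x)
    have := G.dist_comm (u := w) (v := y)
    have := G.dist_comm (u := w) (v := z)
    have := G.dist_comm (u := z) (v := y)
  · have := le_max_left (G.dist x z + G.dist y w) (G.dist x w + G.dist y z)
    omega
  · have := le_max_right (G.dist x z + G.dist y w) (G.dist x w + G.dist y z)
    omega

theorem Connected.exists_four_point (hG : G.Connected) (hsymm : ∀ a b, L a b = L b a)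
    (hmem : ∀ a b, a ∈ L a b)
    (hchain : ∀ a b, ReflTransGen (fun p q => p ∈ L a b ∧ q ∈ L a b ∧ G.dist p q ≤ s) a b)
    (hthin : G.ThinTriangles L T)
    (hsmall : ∀ a b, G.dist a b ≤ 1 → ∀ z ∈ L a b, G.dist a z ≤ M) :
    ∃ δ, ∀ x y z w, G.dist x y + G.dist z w ≤
      max (G.dist x z + G.dist y w) (G.dist x w + G.dist y z) + δ := by
  obtain ⟨C, hnear⟩ := hG.exists_nearGeodesics hsymm hthin hsmall
  exact ⟨_, hG.four_point hmem hchain hthin hnear⟩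

end SimpleGraph

structure CoarselyOrderedPaths (V : Type*) where
  Λ : V → V → Set V
  le : V → V → V → V → Prop
  mem : ∀ a b : V, a ∈ Λ a b ∧ b ∈ Λ a b
  trans : ∀ a b x y z : V, le a b x y → le a b y z → le a b x z
  total : ∀ a b : V, ∀ x ∈ Λ a b, ∀ y ∈ Λ a b, le a b x y ∨ le a b y x
  Λ_comm : ∀ a b : V, Λ a b = Λ b a
  le_comm : ∀ a b x y : V, le a b x y ↔ le b a y x

namespace CoarselyOrderedPaths

variable {V : Type*} (P : CoarselyOrderedPaths V) {a b m u w x y z : V}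

def I (a b x y : V) : Set V := coarseInterval P.Λ P.le a b x y

def seg (a b : V) : Set V := P.I a b a b

theorem mem_I : z ∈ P.I a b x y ↔
    z ∈ P.Λ a b ∧ (P.le a b x z ∧ P.le a b z y ∨ P.le a b y z ∧ P.le a b z x) := Iff.rfl

theorem I_comm : P.I a b x y = P.I a b y x := by
  ext z; simp only [mem_I]; tauto

theorem I_swap : P.I a b x y = P.I b a x y := by
  ext z; simp only [mem_I, P.Λ_comm a b, P.le_comm a b]; tauto

theorem seg_comm : P.seg a b = P.seg b a := by
  rw [seg, seg, I_swap, I_comm]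

theorem left_mem_I (hx : x ∈ P.Λ a b) (hy : y ∈ P.Λ a b) : x ∈ P.I a b x y := by
  have := P.total a b x hx x hx
  have := P.total a b x hx y hy
  rw [mem_I]; tauto

theorem right_mem_I (hx : x ∈ P.Λ a b) (hy : y ∈ P.Λ a b) : y ∈ P.I a b x y :=
  P.I_comm ▸ P.left_mem_I hy hx

theorem left_mem_seg : a ∈ P.seg a b := P.left_mem_I (P.mem a b).1 (P.mem a b).2

theorem right_mem_seg : b ∈ P.seg a b := P.right_mem_I (P.mem a b).1 (P.mem a b).2

theorem mem_I_or_mem_I (hz : z ∈ P.I a b x y) (hw : w ∈ P.Λ a b) :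
    z ∈ P.I a b x w ∨ z ∈ P.I a b w y := by
  have := P.total a b z hz.1 w hw
  simp only [mem_I] at *
  grind

theorem mem_I_of_mem_I_self (hz : z ∈ P.I a b x x) (hy : y ∈ P.Λ a b) : z ∈ P.I a b x y := by
  have := P.total a b z hz.1 y hy
  simp only [mem_I] at *
  grind

theorem mem_I_or_mem_I_or_mem_I {p q : V} (ha : a ∈ P.Λ p q) (hb : b ∈ P.Λ p q)
    (hm : m ∈ P.Λ p q) (hu : u ∈ P.I p q a b) (hu' : u ∈ P.I p q a m) (hy : y ∈ P.I p q b m) :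
    a ∈ P.I p q u y ∨ b ∈ P.I p q u y ∨ m ∈ P.I p q u y := by
  have := P.total p q a ha b hb
  have := P.total p q a ha m hm
  have := P.total p q b hb m hm
  have := P.total p q u hu.1 y hy.1
  have := P.trans p q
  simp only [mem_I] at *
  grind

open Classical in
/-- Retraction of `Λ a b` onto `I a b x y`, sending a point beyond an endpoint to that endpoint. -/
noncomputable def clip (a b x y t : V) : V :=
  if t ∈ P.I a b x y then t else if x ∈ P.I a b t y then x else y

theorem clip_of_mem {t : V} (ht : t ∈ P.I a b x y) : P.clip a b x y t = t := if_pos ht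

theorem clip_mem (hx : x ∈ P.Λ a b) (hy : y ∈ P.Λ a b) (t : V) :
    P.clip a b x y t ∈ P.I a b x y := by
  unfold clip
  split_ifs with h
  exacts [h, P.left_mem_I hx hy, P.right_mem_I hx hy]

theorem clip_eq_or_mem_I {p q : V} (hx : x ∈ P.Λ a b) (hy : y ∈ P.Λ a b) (hp : p ∈ P.Λ a b)
    (hq : q ∈ P.Λ a b) : P.clip a b x y p = P.clip a b x y q ∨
      P.clip a b x y p ∈ P.I a b p q ∧ P.clip a b x y q ∈ P.I a b p q := by
  have := P.total a b x hx y hy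
  have := P.total a b x hx p hp
  have := P.total a b x hx q hq
  have := P.total a b y hy p hp
  have := P.total a b y hy q hq
  have := P.total a b p hp q hq
  have := P.total a b p hp p hp
  have := P.total a b q hq q hq
  have := P.trans a b
  unfold clip
  split_ifs <;> simp only [mem_I] at * <;> grind

end CoarselyOrderedPaths

/-- `hausdorff`, `diam_adj` and `diam_center` are axioms (1), (2) and (3). -/
structure BowditchPaths {V : Type*} (G : SimpleGraph V) extends CoarselyOrderedPaths V where
  connected : G.Connected
  φ : V → V → V → V
  φ_comm₁₂ : ∀ a b c : V, φ a b c = φ b a c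
  φ_comm₂₃ : ∀ a b c : V, φ a b c = φ a c b
  φ_mem : ∀ a b c : V, φ a b c ∈ Λ a b
  K : ℕ
  K_pos : 0 < K
  hausdorff : ∀ a b c : V, ∀ x ∈ coarseInterval Λ le a b a (φ a b c),
    ∃ y ∈ coarseInterval Λ le a c a (φ a b c), G.dist x y ≤ K
  diam_adj : ∀ a b c d : V, G.Adj c d → ∀ x ∈ coarseInterval Λ le a b (φ a b c) (φ a b d),
    ∀ y ∈ coarseInterval Λ le a b (φ a b c) (φ a b d), G.dist x y ≤ K
  diam_center : ∀ a b c : V, c ∈ Λ a b → ∀ x ∈ coarseInterval Λ le a b c (φ a b c),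
    ∀ y ∈ coarseInterval Λ le a b c (φ a b c), G.dist x y ≤ K

namespace BowditchPaths

open CoarselyOrderedPaths Relation

variable {V : Type*} {G : SimpleGraph V} (S : BowditchPaths G) {a b c m p u x y z : V}

theorem φ_rotate (a b c : V) : S.φ a b c = S.φ b c a := by
  rw [S.φ_comm₁₂, S.φ_comm₂₃]

theorem dist_le_of_mem_I_self (hp : p ∈ S.Λ a b) (hz : z ∈ S.I a b p p) :
    G.dist p z ≤ S.K :=
  S.diam_center a b p hp p (S.left_mem_I hp (S.φ_mem a b p)) z
    (S.mem_I_of_mem_I_self hz (S.φ_mem a b p))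

theorem dist_φ_le_of_walk {c₁ c₂ : V} (W : G.Walk c₁ c₂)
    (hz : z ∈ S.I a b (S.φ a b c₁) (S.φ a b c₂)) :
    G.dist (S.φ a b c₁) z ≤ S.K * W.length + S.K := by
  induction W with
  | nil => simpa using S.dist_le_of_mem_I_self (S.φ_mem a b _) hz
  | @cons c d _ hcd W ih =>
    have hφ := S.left_mem_I (S.φ_mem a b c) (S.φ_mem a b d)
    rw [SimpleGraph.Walk.length_cons, mul_add_one]
    rcases S.mem_I_or_mem_I hz (S.φ_mem a b d) with h | h
    · have := S.diam_adj a b c d hcd _ hφ z h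
      omega
    · have := ih h
      have := S.diam_adj a b c d hcd _ hφ _ (S.right_mem_I (S.φ_mem a b c) (S.φ_mem a b d))
      have := S.connected.dist_triangle (u := S.φ a b c) (v := S.φ a b d) (w := z)
      omega

theorem dist_le_of_mem_I (hx : x ∈ S.Λ a b) (hy : y ∈ S.Λ a b) (hz : z ∈ S.I a b x y) :
    G.dist x z ≤ S.K * G.dist x y + 2 * S.K := by
  have hxφ := S.diam_center a b x hx x (S.left_mem_I hx (S.φ_mem a b x))
  rcases S.mem_I_or_mem_I hz (S.φ_mem a b x) with h | h
  · have := hxφ z h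
    omega
  rcases S.mem_I_or_mem_I h (S.φ_mem a b y) with h | h
  · obtain ⟨W, hW⟩ := S.connected.exists_walk_length_eq_dist x y
    have := S.dist_φ_le_of_walk W h
    rw [hW] at this
    have := hxφ _ (S.right_mem_I hx (S.φ_mem a b x))
    have := S.connected.dist_triangle (u := x) (v := S.φ a b x) (w := z)
    omega
  · rw [I_comm] at h
    have := S.diam_center a b y hy y (S.left_mem_I hy (S.φ_mem a b y)) z h
    have := S.connected.dist_triangle (u := x) (v := y) (w := z)
    have := G.dist_comm (u := y) (v := z)
    have := Nat.le_mul_of_pos_left (G.dist x y) S.K_pos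
    omega

theorem dist_le_of_dist_le_one (hab : G.dist a b ≤ 1) (hz : z ∈ S.seg a b) :
    G.dist a z ≤ 3 * S.K := by
  have := S.dist_le_of_mem_I (S.mem a b).1 (S.mem a b).2 hz
  have := Nat.mul_le_mul_left S.K hab
  omega

theorem exists_dist_le_of_mem_I (hm : S.φ a b c = m) (hx : x ∈ S.I a b a m) :
    ∃ y ∈ S.I a c a m, G.dist x y ≤ S.K := by
  subst hm
  exact S.hausdorff a b c x hx

theorem tripod_of_mem_I (hu : u ∈ S.seg a b) (hum : u ∈ S.I a b a (S.φ a b c)) :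
    (∃ p ∈ S.seg a c ∪ S.seg c b, G.dist u p ≤ S.K * (3 * S.K) + 2 * S.K) ∨
      G.dist u (S.φ a b c) ≤ S.K * (3 * S.K) + 2 * S.K := by
  have tri := @S.connected.dist_triangle
  obtain ⟨y₁, hy₁, hu₁⟩ := S.exists_dist_le_of_mem_I rfl hum
  rcases S.mem_I_or_mem_I hy₁ (S.mem a c).2 with h | h
  · exact Or.inl ⟨y₁, Or.inl h, by omega⟩
  rw [I_swap] at h
  obtain ⟨y₂, hy₂, h₁₂⟩ := S.exists_dist_le_of_mem_I (S.φ_rotate c a b) h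
  rcases S.mem_I_or_mem_I hy₂ (S.mem c b).2 with h | h
  · exact Or.inl ⟨y₂, Or.inr h, by have := tri (u := u) (v := y₁) (w := y₂); omega⟩
  rw [I_swap] at h
  obtain ⟨y₃, hy₃, h₂₃⟩ := S.exists_dist_le_of_mem_I (S.φ_rotate a b c).symm h
  rw [← I_swap] at hy₃
  have hu₃ : G.dist u y₃ ≤ 3 * S.K := by
    have := tri (u := u) (v := y₁) (w := y₂)
    have := tri (u := u) (v := y₂) (w := y₃)
    omega
  have key : ∀ t ∈ S.I a b u y₃, G.dist u t ≤ S.K * (3 * S.K) + 2 * S.K := fun t ht =>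
    (S.dist_le_of_mem_I hu.1 hy₃.1 ht).trans (by gcongr)
  rcases S.mem_I_or_mem_I_or_mem_I (S.mem a b).1 (S.mem a b).2 (S.φ_mem a b c) hu hum hy₃
    with h | h | h
  · exact Or.inl ⟨a, Or.inl S.left_mem_seg, key a h⟩
  · exact Or.inl ⟨b, Or.inr S.right_mem_seg, key b h⟩
  · exact Or.inr (key _ h)

theorem tripod (hu : u ∈ S.seg a b) :
    (∃ p ∈ S.seg a c ∪ S.seg c b, G.dist u p ≤ S.K * (3 * S.K) + 2 * S.K) ∨
      G.dist u (S.φ a b c) ≤ S.K * (3 * S.K) + 2 * S.K := by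
  rcases S.mem_I_or_mem_I hu (S.φ_mem a b c) with h | h
  · exact S.tripod_of_mem_I hu h
  rw [I_comm, I_swap, S.φ_comm₁₂] at h
  rw [seg_comm] at hu
  rw [S.φ_comm₁₂, Set.union_comm, S.seg_comm (a := a) (b := c), S.seg_comm (a := c) (b := b)]
  exact S.tripod_of_mem_I hu h

theorem reflTransGen_of_mem (hx : x ∈ S.Λ a b) (hy : y ∈ S.Λ a b) :
    ReflTransGen (fun p q => p ∈ S.Λ a b ∧ q ∈ S.Λ a b ∧
      ∀ u ∈ S.I a b p q, ∀ v ∈ S.I a b p q, G.dist u v ≤ S.K) x y := by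
  refine .head (b := S.φ a b x) ⟨hx, S.φ_mem a b x, S.diam_center a b x hx⟩
    (.tail (b := S.φ a b y) ?_ ⟨S.φ_mem a b y, hy, ?_⟩)
  · exact ((G.reachable_iff_reflTransGen x y).1 (S.connected x y)).lift (S.φ a b)
      fun c d hcd => ⟨S.φ_mem a b c, S.φ_mem a b d, S.diam_adj a b c d hcd⟩
  · rw [I_comm]
    exact S.diam_center a b y hy

theorem reflTransGen_seg (hz : z ∈ S.seg a b) :
    ReflTransGen (fun p q => p ∈ S.seg a b ∧ q ∈ S.seg a b ∧ G.dist p q ≤ S.K) a z := by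
  have hab := S.mem a b
  suffices ReflTransGen (fun p q => p ∈ S.seg a b ∧ q ∈ S.seg a b ∧ G.dist p q ≤ S.K)
      (S.clip a b a b a) (S.clip a b a b z) by
    rwa [S.clip_of_mem S.left_mem_seg, S.clip_of_mem hz] at this
  refine (S.reflTransGen_of_mem hab.1 hz.1).lift _ fun p q ⟨hp, hq, hpq⟩ =>
    ⟨S.clip_mem hab.1 hab.2 p, S.clip_mem hab.1 hab.2 q, ?_⟩
  rcases S.clip_eq_or_mem_I hab.1 hab.2 hp hq with h | ⟨h₁, h₂⟩
  · simp [h]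
  · exact hpq _ h₁ _ h₂

theorem exists_thinTriangles : ∃ T, G.ThinTriangles S.seg T := by
  set R := S.K * (3 * S.K) + 2 * S.K
  refine ⟨3 * R + S.K, fun a b c z hz => ?_⟩
  have tri := @S.connected.dist_triangle
  rcases S.tripod (c := c) hz with ⟨p, hp, hzp⟩ | hzm
  · exact ⟨p, hp, by omega⟩
  by_cases haz : G.dist a z ≤ 2 * R + S.K
  · exact ⟨a, Or.inl S.left_mem_seg, by rw [G.dist_comm]; omega⟩
  obtain ⟨p, q, ⟨-, hq, hpq⟩, hpz, hqz⟩ := (S.reflTransGen_seg hz).exists_rel_of_not_of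
    (P := fun v => G.dist v z ≤ 2 * R + S.K) haz (by simp)
  rcases S.tripod (c := c) hq with ⟨p', hp', hqp'⟩ | hqm
  · refine ⟨p', hp', ?_⟩
    have := tri (u := z) (v := q) (w := p')
    have := G.dist_comm (u := z) (v := q)
    omega
  · have := tri (u := p) (v := q) (w := z)
    have := tri (u := q) (v := S.φ a b c) (w := z)
    have := G.dist_comm (u := z) (v := S.φ a b c)
    omega

end BowditchPaths

/-- Bowditch's hyperbolicity criterion (Prop 3.1 of Bowditch, as used in the
Appendix of the paper): a connected graph equipped with coarse geodesics
`Λ_{ab}` (coarsely totally ordered, symmetric in `a, b`) and a symmetric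
ternary "center" function `φ` satisfying the three axioms with constant `K`
is Gromov hyperbolic, in the four-point sense. -/
theorem hyperbolic_of_coarse_geodesics_and_centers {V : Type*}
    (G : SimpleGraph V) (hconn : G.Connected)
    (Λ : V → V → Set V) (le : V → V → V → V → Prop)
    -- endpoints belong to the coarse geodesic
    (hmem : ∀ a b : V, a ∈ Λ a b ∧ b ∈ Λ a b)
    -- the coarse order on `Λ a b` is transitive and total
    (htrans : ∀ a b x y z : V, le a b x y → le a b y z → le a b x z)
    (htotal : ∀ a b : V, ∀ x ∈ Λ a b, ∀ y ∈ Λ a b, le a b x y ∨ le a b y x)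
    -- `Λ_{ab} = Λ_{ba}` as sets, with reversed order
    (hsymmΛ : ∀ a b : V, Λ a b = Λ b a)
    (hsymmle : ∀ a b x y : V, le a b x y ↔ le b a y x)
    -- the center function, symmetric under permutations of its arguments
    (φ : V → V → V → V)
    (hφswap₁ : ∀ a b c : V, φ a b c = φ b a c)
    (hφswap₂ : ∀ a b c : V, φ a b c = φ a c b)
    (hφmem : ∀ a b c : V, φ a b c ∈ Λ a b)
    (K : ℕ) (hK : 0 < K)
    -- Axiom (1): Hausdorff distance between `Λ_{ab}[a, φ(a,b,c)]` and
    -- `Λ_{ac}[a, φ(a,b,c)]` is at most `K`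
    (ax1 : ∀ a b c : V,
      (∀ x ∈ coarseInterval Λ le a b a (φ a b c),
        ∃ y ∈ coarseInterval Λ le a c a (φ a b c), G.dist x y ≤ K) ∧
      (∀ y ∈ coarseInterval Λ le a c a (φ a b c),
        ∃ x ∈ coarseInterval Λ le a b a (φ a b c), G.dist x y ≤ K))
    -- Axiom (2): if `c` and `d` are adjacent then
    -- `diam Λ_{ab}[φ(a,b,c), φ(a,b,d)] ≤ K`
    (ax2 : ∀ a b c d : V, G.Adj c d →
      ∀ x ∈ coarseInterval Λ le a b (φ a b c) (φ a b d),
      ∀ y ∈ coarseInterval Λ le a b (φ a b c) (φ a b d), G.dist x y ≤ K)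
    -- Axiom (3): if `c ∈ Λ_{ab}` then `diam Λ_{ab}[c, φ(a,b,c)] ≤ K`
    (ax3 : ∀ a b c : V, c ∈ Λ a b →
      ∀ x ∈ coarseInterval Λ le a b c (φ a b c),
      ∀ y ∈ coarseInterval Λ le a b c (φ a b c), G.dist x y ≤ K) :
    ∃ δ : ℕ, ∀ x y z w : V,
      G.dist x y + G.dist z w ≤
        max (G.dist x z + G.dist y w) (G.dist x w + G.dist y z) + δ := by
  let S : BowditchPaths G :=
    { Λ, le, mem := hmem, trans := htrans, total := htotal, Λ_comm := hsymmΛ,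
      le_comm := hsymmle, connected := hconn, φ, φ_comm₁₂ := hφswap₁, φ_comm₂₃ := hφswap₂,
      φ_mem := hφmem, K, K_pos := hK, hausdorff := fun a b c => (ax1 a b c).1,
      diam_adj := ax2, diam_center := ax3 }
  obtain ⟨T, hthin⟩ := S.exists_thinTriangles
  exact hconn.exists_four_point (fun a b => S.seg_comm) (fun a b => S.left_mem_seg)
    (fun a b => S.reflTransGen_seg S.right_mem_seg) hthin
    (fun a b hab z hz => S.dist_le_of_dist_le_one hab hz)
end
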